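/- The entire function f is of order at most 3/2: there exists a constant D > 0 such that |f(λ)| ≤ D·exp(D|λ|^{3/2}) for all λ ∈ ℂ. -/

import Mathlib

/-!
Write `Ai z = A S₁(z³) + B z S₂(z³)`, where the coefficients `∏_{j<k} (3j+r) / (3k+s)!` of `S₁` and
`S₂` (`(r, s) = (1, 0), (2, 1)`) are at most `3^k / (2k)!`, since `∏_{j<k} (3j+r) ≤ 3^k k!` and
`k! (2k)! ≤ (3k)!`. Comparison with the series of `cosh` then gives `‖Sᵢ w‖ ≤ exp √(3‖w‖)`, so `Ai`
has order `3/2` and finite type. The Cauchy estimate on unit circles passes such a bound from an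
entire function to its derivative, and the bound survives rotations of the variable and products,
so `f` inherits it from `Ai'`.
-/

noncomputable section

def Ai (z : ℂ) : ℂ :=
  (((3 : ℝ) ^ (-(2:ℝ)/3) / Real.Gamma (2/3) : ℝ) : ℂ) *
    ∑' k : ℕ, (∏ j ∈ Finset.range k, ((3*j+1 : ℕ) : ℂ)) * z ^ (3*k) / ((3*k).factorial : ℂ)
  + ((-((3 : ℝ) ^ (-(1:ℝ)/3)) / Real.Gamma (1/3) : ℝ) : ℂ) *
    ∑' k : ℕ, (∏ j ∈ Finset.range k, ((3*j+2 : ℕ) : ℂ)) * z ^ (3*k+1) / ((3*k+1).factorial : ℂ)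

def Ai' (z : ℂ) : ℂ := deriv Ai z

def α : ℝ := 2 * Real.pi / 3

def f (lam : ℂ) : ℂ :=
  2 * Real.pi * Ai' (Complex.exp (-(α:ℂ) * Complex.I) * lam) *
    Ai' (Complex.exp ((α:ℂ) * Complex.I) * lam)

open Real Finset FormalMultilinearSeries
open scoped Nat

lemma self_le_exp_rpow {t ρ : ℝ} (ht : 0 ≤ t) (hρ : 1 ≤ ρ) : t ≤ exp (t ^ ρ) := by
  have ht_le : t ≤ t ^ ρ + 1 := by
    rcases le_total t 1 with h | h
    · linarith [rpow_nonneg ht ρ]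
    · have := rpow_le_rpow_of_exponent_le h hρ
      rw [rpow_one] at this
      linarith
  linarith [add_one_le_exp (t ^ ρ)]

lemma add_one_rpow_le {t ρ : ℝ} (ht : 0 ≤ t) (hρ : 0 ≤ ρ) :
    (t + 1) ^ ρ ≤ 2 ^ ρ * (t ^ ρ + 1) := by
  have hmax : (max t 1) ^ ρ ≤ t ^ ρ + 1 := by
    rcases max_choice t 1 with h | h <;> rw [h]
    · linarith
    · linarith [rpow_nonneg ht ρ, one_rpow ρ]
  calc (t + 1) ^ ρ ≤ (2 * max t 1) ^ ρ := by
        gcongr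
        linarith [le_max_left t 1, le_max_right t 1]
    _ = 2 ^ ρ * (max t 1) ^ ρ := mul_rpow zero_le_two (by positivity)
    _ ≤ 2 ^ ρ * (t ^ ρ + 1) := by gcongr

/-- Growth of order at most `ρ` and finite type. -/
def HasExpGrowth (ρ : ℝ) (g : ℂ → ℂ) : Prop :=
  ∃ C > 0, ∀ z, ‖g z‖ ≤ C * exp (C * ‖z‖ ^ ρ)

namespace HasExpGrowth

variable {ρ : ℝ} {g h : ℂ → ℂ}

theorem const_mul (c : ℂ) (hg : HasExpGrowth ρ g) : HasExpGrowth ρ fun z => c * g z := by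
  obtain ⟨C, hC, hg⟩ := hg
  refine ⟨(‖c‖ + 1) * C, by positivity, fun z => ?_⟩
  calc ‖c * g z‖ = ‖c‖ * ‖g z‖ := norm_mul _ _
    _ ≤ ‖c‖ * (C * exp (C * ‖z‖ ^ ρ)) := by gcongr; exact hg z
    _ ≤ (‖c‖ + 1) * C * exp ((‖c‖ + 1) * C * ‖z‖ ^ ρ) := by
      rw [← mul_assoc]
      gcongr <;> nlinarith [norm_nonneg c]

theorem add (hg : HasExpGrowth ρ g) (hh : HasExpGrowth ρ h) :
    HasExpGrowth ρ fun z => g z + h z := by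
  obtain ⟨C, hC, hg⟩ := hg
  obtain ⟨D, hD, hh⟩ := hh
  refine ⟨C + D, by positivity, fun z => ?_⟩
  calc ‖g z + h z‖ ≤ C * exp (C * ‖z‖ ^ ρ) + D * exp (D * ‖z‖ ^ ρ) :=
        (norm_add_le _ _).trans (add_le_add (hg z) (hh z))
    _ ≤ C * exp ((C + D) * ‖z‖ ^ ρ) + D * exp ((C + D) * ‖z‖ ^ ρ) := by
        gcongr <;> linarith
    _ = (C + D) * exp ((C + D) * ‖z‖ ^ ρ) := by ring

theorem mul (hg : HasExpGrowth ρ g) (hh : HasExpGrowth ρ h) :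
    HasExpGrowth ρ fun z => g z * h z := by
  obtain ⟨C, hC, hg⟩ := hg
  obtain ⟨D, hD, hh⟩ := hh
  refine ⟨C * D + C + D, by positivity, fun z => ?_⟩
  calc ‖g z * h z‖ ≤ C * exp (C * ‖z‖ ^ ρ) * (D * exp (D * ‖z‖ ^ ρ)) := by
        rw [norm_mul]; gcongr; exacts [hg z, hh z]
    _ = C * D * exp ((C + D) * ‖z‖ ^ ρ) := by rw [add_mul, exp_add]; ring
    _ ≤ (C * D + C + D) * exp ((C * D + C + D) * ‖z‖ ^ ρ) := by
        gcongr <;> nlinarith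

theorem comp_mul_left {u : ℂ} (hu : ‖u‖ = 1) (hg : HasExpGrowth ρ g) :
    HasExpGrowth ρ fun z => g (u * z) := by
  obtain ⟨C, hC, hg⟩ := hg
  exact ⟨C, hC, fun z => by simpa [norm_mul, hu] using hg (u * z)⟩

theorem deriv (hρ : 0 ≤ ρ) (hd : Differentiable ℂ g) (hg : HasExpGrowth ρ g) :
    HasExpGrowth ρ (deriv g) := by
  obtain ⟨C, hC, hg⟩ := hg
  have hK : 0 ≤ C * 2 ^ ρ := by positivity
  refine ⟨C * exp (C * 2 ^ ρ) + C * 2 ^ ρ, by positivity, fun z => ?_⟩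
  have hcauchy : ‖_root_.deriv g z‖ ≤ C * exp (C * (‖z‖ + 1) ^ ρ) := by
    simpa using Complex.norm_deriv_le_of_forall_mem_sphere_norm_le one_pos hd.diffContOnCl
      fun w hw => (hg w).trans <| by
        have hw : ‖w‖ ≤ ‖z‖ + 1 := by
          linarith [norm_le_insert' w z, mem_sphere_iff_norm.1 hw]
        gcongr
  calc ‖_root_.deriv g z‖ ≤ C * exp (C * (‖z‖ + 1) ^ ρ) := hcauchy
    _ ≤ C * exp (C * (2 ^ ρ * (‖z‖ ^ ρ + 1))) := by
        gcongr
        exact add_one_rpow_le (norm_nonneg z) hρ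
    _ = C * exp (C * 2 ^ ρ) * exp (C * 2 ^ ρ * ‖z‖ ^ ρ) := by
        rw [mul_assoc _ (exp _), ← exp_add]
        congr 2
        ring
    _ ≤ (C * exp (C * 2 ^ ρ) + C * 2 ^ ρ) *
          exp ((C * exp (C * 2 ^ ρ) + C * 2 ^ ρ) * ‖z‖ ^ ρ) := by
        gcongr <;> linarith [show 0 ≤ C * exp (C * 2 ^ ρ) by positivity]

end HasExpGrowth

theorem hasExpGrowth_id {ρ : ℝ} (hρ : 1 ≤ ρ) : HasExpGrowth ρ fun z => z :=
  ⟨1, one_pos, fun z => by simpa using self_le_exp_rpow (norm_nonneg z) hρ⟩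

lemma cosh_le_exp_of_nonneg {x : ℝ} (hx : 0 ≤ x) : cosh x ≤ exp x := by
  rw [cosh_eq]
  linarith [exp_le_exp.2 (show -x ≤ x by linarith)]

namespace FormalMultilinearSeries

variable {a : ℕ → ℂ} {c : ℝ}

lemma norm_mul_pow_le_of_norm_le (hc : 0 ≤ c) (ha : ∀ k, ‖a k‖ ≤ c ^ k / (2 * k)!)
    {t : ℝ} (ht : 0 ≤ t) (k : ℕ) :
    ‖a k‖ * t ^ k ≤ √(c * t) ^ (2 * k) / (2 * k)! := by
  rw [pow_mul, sq_sqrt (by positivity), mul_pow, mul_div_right_comm]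
  gcongr
  exact ha k

lemma differentiable_ofScalars_sum_of_norm_le (hc : 0 ≤ c)
    (ha : ∀ k, ‖a k‖ ≤ c ^ k / (2 * k)!) : Differentiable ℂ (ofScalars ℂ a).sum := by
  have hrad : (ofScalars ℂ a).radius = ⊤ := radius_eq_top_of_summable_norm _ fun r => by
    simpa only [ofScalars_norm] using Summable.of_nonneg_of_le (fun _ => by positivity)
      (norm_mul_pow_le_of_norm_le hc ha r.coe_nonneg) (hasSum_cosh _).summable
  exact fun w => ((ofScalars ℂ a).analyticOnNhd w (by simp [hrad])).differentiableAt

lemma norm_ofScalars_sum_le_exp_sqrt (hc : 0 ≤ c)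
    (ha : ∀ k, ‖a k‖ ≤ c ^ k / (2 * k)!) (w : ℂ) :
    ‖(ofScalars ℂ a).sum w‖ ≤ exp √(c * ‖w‖) := by
  refine le_trans ?_ (cosh_le_exp_of_nonneg (sqrt_nonneg _))
  refine tsum_of_norm_bounded (hasSum_cosh _) fun k => ?_
  rw [ofScalars_apply_eq, smul_eq_mul, norm_mul, norm_pow]
  exact norm_mul_pow_le_of_norm_le hc ha (norm_nonneg w) k

end FormalMultilinearSeries

theorem hasExpGrowth_ofScalars_sum_comp_cube {a : ℕ → ℂ} {c : ℝ} (hc : 0 ≤ c)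
    (ha : ∀ k, ‖a k‖ ≤ c ^ k / (2 * k)!) :
    HasExpGrowth (3 / 2) fun z => (ofScalars ℂ a).sum (z ^ 3) := by
  refine ⟨√c + 1, by positivity, fun z => ?_⟩
  have hsqrt : √(c * ‖z ^ 3‖) = √c * ‖z‖ ^ ((3 : ℝ) / 2) := by
    rw [norm_pow, sqrt_mul hc, sqrt_eq_rpow (‖z‖ ^ 3), ← rpow_natCast,
      ← rpow_mul (norm_nonneg z)]
    norm_num
  calc ‖(ofScalars ℂ a).sum (z ^ 3)‖ ≤ exp (√c * ‖z‖ ^ ((3 : ℝ) / 2)) :=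
        hsqrt ▸ norm_ofScalars_sum_le_exp_sqrt hc ha (z ^ 3)
    _ ≤ (√c + 1) * exp ((√c + 1) * ‖z‖ ^ ((3 : ℝ) / 2)) := by
        rw [← one_mul (exp _)]
        gcongr <;> linarith [sqrt_nonneg c]

def airyCoeff (r s k : ℕ) : ℂ :=
  (∏ j ∈ range k, ((3 * j + r : ℕ) : ℂ)) / ((3 * k + s)! : ℂ)

lemma prod_three_mul_add_le {r : ℕ} (hr : r ≤ 3) (k : ℕ) :
    ∏ j ∈ range k, (3 * j + r) ≤ 3 ^ k * k ! :=
  calc ∏ j ∈ range k, (3 * j + r) ≤ ∏ j ∈ range k, 3 * (j + 1) :=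
        prod_le_prod' fun j _ => by omega
    _ = 3 ^ k * k ! := by
        rw [prod_mul_distrib, prod_const, card_range, prod_range_add_one_eq_factorial]

lemma factorial_mul_factorial_two_mul_le (k : ℕ) : k ! * (2 * k)! ≤ (3 * k)! := by
  have hdvd := Nat.factorial_mul_factorial_dvd_factorial_add k (2 * k)
  rw [show k + 2 * k = 3 * k by omega] at hdvd
  exact Nat.le_of_dvd (Nat.factorial_pos _) hdvd

lemma norm_airyCoeff_le {r : ℕ} (hr : r ≤ 3) (s k : ℕ) :
    ‖airyCoeff r s k‖ ≤ 3 ^ k / (2 * k)! := by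
  rw [airyCoeff, ← Nat.cast_prod, norm_div, Complex.norm_natCast, Complex.norm_natCast,
    div_le_div_iff₀ (by positivity) (by positivity)]
  have key : (∏ j ∈ range k, (3 * j + r)) * (2 * k)! ≤ 3 ^ k * (3 * k + s)! :=
    calc (∏ j ∈ range k, (3 * j + r)) * (2 * k)! ≤ 3 ^ k * (k ! * (2 * k)!) := by
          rw [← mul_assoc]; exact Nat.mul_le_mul_right _ (prod_three_mul_add_le hr k)
      _ ≤ 3 ^ k * (3 * k + s)! :=
          Nat.mul_le_mul_left _ ((factorial_mul_factorial_two_mul_le k).trans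
            (Nat.factorial_le (by omega)))
  exact_mod_cast key

lemma Ai_eq_ofScalars_sum : ∃ A B : ℂ, Ai = fun z =>
    A * (ofScalars ℂ (airyCoeff 1 0)).sum (z ^ 3) +
      B * (z * (ofScalars ℂ (airyCoeff 2 1)).sum (z ^ 3)) := by
  refine ⟨?A, ?B, funext fun z => ?_⟩
  show Ai z = _
  rw [Ai]
  simp only [FormalMultilinearSeries.sum, ofScalars_apply_eq, smul_eq_mul]
  congr 2
  · rfl
  · exact tsum_congr fun k => by rw [airyCoeff, add_zero, ← pow_mul]; push_cast; ring
  · rfl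
  · rw [← tsum_mul_left]
    refine tsum_congr fun k => ?_
    rw [airyCoeff, ← pow_mul, pow_succ]
    push_cast
    ring

theorem differentiable_Ai : Differentiable ℂ Ai := by
  obtain ⟨A, B, hAi⟩ := Ai_eq_ofScalars_sum
  have h₁ := differentiable_ofScalars_sum_of_norm_le zero_le_three
    (norm_airyCoeff_le (r := 1) (by norm_num) 0)
  have h₂ := differentiable_ofScalars_sum_of_norm_le zero_le_three
    (norm_airyCoeff_le (r := 2) (by norm_num) 1)
  rw [hAi]
  fun_prop

theorem hasExpGrowth_Ai : HasExpGrowth (3 / 2) Ai := by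
  obtain ⟨A, B, hAi⟩ := Ai_eq_ofScalars_sum
  have h₁ := hasExpGrowth_ofScalars_sum_comp_cube zero_le_three
    (norm_airyCoeff_le (r := 1) (by norm_num) 0)
  have h₂ := hasExpGrowth_ofScalars_sum_comp_cube zero_le_three
    (norm_airyCoeff_le (r := 2) (by norm_num) 1)
  rw [hAi]
  exact (h₁.const_mul A).add (((hasExpGrowth_id (by norm_num)).mul h₂).const_mul B)

/-- The entire function `f` is of order at most `3/2`:
there is `D > 0` with `|f(λ)| ≤ D exp(D |λ|^{3/2})` for all `λ`. -/
theorem f_order_three_halves :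
    ∃ D > (0:ℝ), ∀ lam : ℂ,
      ‖f lam‖ ≤ D * Real.exp (D * ‖lam‖ ^ ((3:ℝ)/2)) := by
  have hAi' : HasExpGrowth (3 / 2) Ai' := hasExpGrowth_Ai.deriv (by norm_num) differentiable_Ai
  have hrot : ∀ θ : ℝ, ‖Complex.exp (θ * Complex.I)‖ = 1 := Complex.norm_exp_ofReal_mul_I
  exact ((hAi'.comp_mul_left (by simpa using hrot (-α))).const_mul (2 * π)).mul
    (hAi'.comp_mul_left (hrot α))

end
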